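/- arXiv:2310.17736 — 4 statements merged into one kernel-verified Lean document; each statement's English description precedes it below -/
import Mathlib

section
/- Let d ≥ 1. There exists a constant C > 0, depending only on d, such that for all σ > 0 and all R > 0: ∫_{{y ∈ ℝ^d : |y| ≥ R}} ( |y|²/σ⁴ − d/σ² )² · (π σ²)^(−d) · e^(−|y|²/σ²) dy ≤ C · σ^(−d−3) · R^(−1) · e^(−R²/(2σ²)). -/
/-!
Write `x = ‖y‖² / σ²`. A quarter of the weight `e^{-x}` absorbs the polynomial factor `(x - d)²`,
leaving `e^{-3x/4}`. On `‖y‖ ≥ R` one has `‖y‖² ≥ R²`, `‖y‖² ≥ R |y₀|` and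
`‖y‖² ≥ ∑_{i ≥ 1} yᵢ²`, hence `(3/4) ‖y‖² ≥ R²/2 + R |y₀| / 8 + ∑_{i ≥ 1} yᵢ² / 8`. So on the
tail the integrand is dominated by `e^{-R²/(2σ²)}` times a Laplace density in `y₀` and Gaussians
in the other coordinates. Integrated over all of space this product is
`16 σ² / R · (√(8π) σ)^(d-1)`; the factor `1/R` comes from the Laplace factor.
-/

open MeasureTheory Real

theorem integral_exp_neg_mul_abs {a : ℝ} (ha : 0 < a) : ∫ x : ℝ, exp (-a * |x|) = 2 / a := by
  rw [integral_comp_abs (f := fun x => exp (-a * x)), integral_exp_mul_Ioi (neg_lt_zero.2 ha)]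
  field_simp
  simp

theorem integrable_exp_neg_mul_abs {a : ℝ} (ha : 0 < a) :
    Integrable fun x : ℝ => exp (-a * |x|) :=
  .of_integral_ne_zero <| by rw [integral_exp_neg_mul_abs ha]; positivity

theorem sq_sub_mul_exp_neg_div_four_le (c : ℝ) {x : ℝ} (hx : 0 ≤ x) :
    (x - c) ^ 2 * exp (-(x / 4)) ≤ 2 * c ^ 2 + 128 := by
  have hsq : x ^ 2 * exp (-(x / 4)) ≤ 64 := by
    have hlin := add_one_le_exp (x / 8)
    have hsq_le : x ^ 2 ≤ 64 * exp (x / 4) := by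
      rw [show x / 4 = x / 8 + x / 8 by ring, exp_add]
      nlinarith
    calc x ^ 2 * exp (-(x / 4)) ≤ 64 * exp (x / 4) * exp (-(x / 4)) := by gcongr
      _ = 64 := by rw [mul_assoc, ← exp_add, add_neg_cancel, exp_zero, mul_one]
  have hexp : exp (-(x / 4)) ≤ 1 := exp_le_one_iff.2 (by linarith)
  calc (x - c) ^ 2 * exp (-(x / 4)) ≤ (2 * x ^ 2 + 2 * c ^ 2) * exp (-(x / 4)) := by
        gcongr; nlinarith [sq_nonneg (x + c)]
    _ = 2 * (x ^ 2 * exp (-(x / 4))) + 2 * c ^ 2 * exp (-(x / 4)) := by ring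
    _ ≤ 2 * 64 + 2 * c ^ 2 * 1 := by gcongr
    _ = 2 * c ^ 2 + 128 := by ring

theorem EuclideanSpace.integral_prod_apply {ι : Type*} [Fintype ι] (f : ι → ℝ → ℝ) :
    ∫ y : EuclideanSpace ℝ ι, ∏ i, f i (y i) = ∏ i, ∫ t, f i t := by
  rw [← (PiLp.volume_preserving_toLp ι).integral_comp
    (MeasurableEquiv.toLp 2 _).measurableEmbedding]
  exact integral_fintype_prod_volume_eq_prod f

theorem EuclideanSpace.integrable_prod_apply {ι : Type*} [Fintype ι] {f : ι → ℝ → ℝ}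
    (hf : ∀ i, Integrable (f i)) : Integrable fun y : EuclideanSpace ℝ ι => ∏ i, f i (y i) := by
  rw [← (PiLp.volume_preserving_toLp ι).integrable_comp_emb
    (MeasurableEquiv.toLp 2 _).measurableEmbedding]
  exact Integrable.fintype_prod hf

section TailMajorant

variable {n : ℕ}

noncomputable def tailMajorantFactor (a b : ℝ) : Fin (n + 1) → ℝ → ℝ :=
  Fin.cons (fun t => exp (-a * |t|)) fun _ t => exp (-b * t ^ 2)

theorem prod_tailMajorantFactor (a b : ℝ) (y : EuclideanSpace ℝ (Fin (n + 1))) :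
    ∏ i, tailMajorantFactor a b i (y i) = exp (-a * |y 0| - b * ∑ i : Fin n, y i.succ ^ 2) := by
  simp only [Fin.prod_univ_succ, tailMajorantFactor, Fin.cons_zero, Fin.cons_succ, sub_eq_add_neg,
    exp_add, Finset.mul_sum, ← Finset.sum_neg_distrib, exp_sum, neg_mul]

theorem integrable_prod_tailMajorantFactor {a b : ℝ} (ha : 0 < a) (hb : 0 < b) :
    Integrable fun y : EuclideanSpace ℝ (Fin (n + 1)) => ∏ i, tailMajorantFactor a b i (y i) :=
  EuclideanSpace.integrable_prod_apply <| Fin.cases (integrable_exp_neg_mul_abs ha)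
    fun _ => integrable_exp_neg_mul_sq hb

theorem integral_prod_tailMajorantFactor {a b : ℝ} (ha : 0 < a) :
    ∫ y : EuclideanSpace ℝ (Fin (n + 1)), ∏ i, tailMajorantFactor a b i (y i) =
      2 / a * √(π / b) ^ n := by
  rw [EuclideanSpace.integral_prod_apply, Fin.prod_univ_succ]
  simp only [tailMajorantFactor, Fin.cons_zero, Fin.cons_succ, integral_exp_neg_mul_abs ha,
    integral_gaussian, Finset.prod_const, Finset.card_univ, Fintype.card_fin]

theorem exp_neg_three_quarters_le_tailMajorant {σ R : ℝ} (hσ : 0 < σ) (hR : 0 ≤ R)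
    {y : EuclideanSpace ℝ (Fin (n + 1))} (hy : R ≤ ‖y‖) :
    exp (-(3 / 4 * (‖y‖ ^ 2 / σ ^ 2))) ≤
      exp (-(R ^ 2 / (2 * σ ^ 2))) *
        ∏ i, tailMajorantFactor (R / (8 * σ ^ 2)) (1 / (8 * σ ^ 2)) i (y i) := by
  rw [prod_tailMajorantFactor, ← exp_add, exp_le_exp]
  set S := ∑ i : Fin n, y i.succ ^ 2
  have hnorm : ‖y‖ ^ 2 = y 0 ^ 2 + S := by
    rw [EuclideanSpace.real_norm_sq_eq, Fin.sum_univ_succ]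
  have hy0 : |y 0| ≤ ‖y‖ := by simpa using PiLp.norm_apply_le y 0
  have hexponent : R ^ 2 / 2 + R * |y 0| / 8 + S / 8 ≤ 3 / 4 * ‖y‖ ^ 2 := by
    nlinarith [abs_nonneg (y 0), sq_abs (y 0)]
  calc -(3 / 4 * (‖y‖ ^ 2 / σ ^ 2)) = -(3 / 4 * ‖y‖ ^ 2) / σ ^ 2 := by ring
    _ ≤ -(R ^ 2 / 2 + R * |y 0| / 8 + S / 8) / σ ^ 2 := by gcongr
    _ = _ := by field_simp; ring

end TailMajorant

section GaussianTail

variable {n : ℕ} {σ R : ℝ}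

theorem sq_norm_sq_sub_mul_exp_le_tailMajorant (c : ℝ) (hσ : 0 < σ) (hR : 0 ≤ R)
    {y : EuclideanSpace ℝ (Fin (n + 1))} (hy : R ≤ ‖y‖) :
    (‖y‖ ^ 2 / σ ^ 4 - c / σ ^ 2) ^ 2 * exp (-(‖y‖ ^ 2 / σ ^ 2)) ≤
      (2 * c ^ 2 + 128) / σ ^ 4 * exp (-(R ^ 2 / (2 * σ ^ 2))) *
        ∏ i, tailMajorantFactor (R / (8 * σ ^ 2)) (1 / (8 * σ ^ 2)) i (y i) := by
  set x := ‖y‖ ^ 2 / σ ^ 2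
  have hsq : (‖y‖ ^ 2 / σ ^ 4 - c / σ ^ 2) ^ 2 = (x - c) ^ 2 / σ ^ 4 := by
    simp only [x]; field_simp
  have hsplit : exp (-x) = exp (-(x / 4)) * exp (-(3 / 4 * x)) := by
    rw [← exp_add]; ring_nf
  calc (‖y‖ ^ 2 / σ ^ 4 - c / σ ^ 2) ^ 2 * exp (-x)
      = (x - c) ^ 2 * exp (-(x / 4)) / σ ^ 4 * exp (-(3 / 4 * x)) := by
        rw [hsq, hsplit]; ring
    _ ≤ (2 * c ^ 2 + 128) / σ ^ 4 * (exp (-(R ^ 2 / (2 * σ ^ 2))) *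
        ∏ i, tailMajorantFactor (R / (8 * σ ^ 2)) (1 / (8 * σ ^ 2)) i (y i)) := by
        gcongr
        · exact sq_sub_mul_exp_neg_div_four_le c (by positivity)
        · exact exp_neg_three_quarters_le_tailMajorant hσ hR hy
    _ = _ := by ring

theorem setIntegral_sq_norm_sq_sub_mul_exp_le (c : ℝ) (hσ : 0 < σ) (hR : 0 < R) :
    ∫ y in {y : EuclideanSpace ℝ (Fin (n + 1)) | R ≤ ‖y‖},
        (‖y‖ ^ 2 / σ ^ 4 - c / σ ^ 2) ^ 2 * exp (-(‖y‖ ^ 2 / σ ^ 2)) ≤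
      (2 * c ^ 2 + 128) / σ ^ 4 * exp (-(R ^ 2 / (2 * σ ^ 2))) *
        (16 * σ ^ 2 / R * (√(8 * π) * σ) ^ n) := by
  set a := R / (8 * σ ^ 2)
  set b := 1 / (8 * σ ^ 2)
  set K := (2 * c ^ 2 + 128) / σ ^ 4 * exp (-(R ^ 2 / (2 * σ ^ 2)))
  have hS : MeasurableSet {y : EuclideanSpace ℝ (Fin (n + 1)) | R ≤ ‖y‖} :=
    measurableSet_le measurable_const measurable_norm
  have hint : Integrable fun y : EuclideanSpace ℝ (Fin (n + 1)) =>
      K * ∏ i, tailMajorantFactor a b i (y i) :=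
    (integrable_prod_tailMajorantFactor (by positivity) (by positivity)).const_mul K
  have hnonneg (y : EuclideanSpace ℝ (Fin (n + 1))) :
      0 ≤ K * ∏ i, tailMajorantFactor a b i (y i) := by
    rw [prod_tailMajorantFactor]; positivity
  calc _ ≤ ∫ y in {y : EuclideanSpace ℝ (Fin (n + 1)) | R ≤ ‖y‖},
        K * ∏ i, tailMajorantFactor a b i (y.ofLp i) :=
        integral_mono_of_nonneg (.of_forall fun y => by positivity) hint.integrableOn
          ((ae_restrict_iff' hS).2 (.of_forall fun y hy =>
            sq_norm_sq_sub_mul_exp_le_tailMajorant c hσ hR.le hy))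
    _ ≤ ∫ y : EuclideanSpace ℝ (Fin (n + 1)), K * ∏ i, tailMajorantFactor a b i (y i) :=
        setIntegral_le_integral hint (.of_forall hnonneg)
    _ = K * (16 * σ ^ 2 / R * (√(8 * π) * σ) ^ n) := by
        rw [integral_const_mul, integral_prod_tailMajorantFactor (by positivity),
          show π / b = (√(8 * π) * σ) ^ 2 by
            rw [mul_pow, sq_sqrt (by positivity)]; simp only [b]; field_simp,
          sqrt_sq (by positivity)]
        congr 2
        simp only [a]; field_simp; norm_num

end GaussianTail

/-- tail estimate for the squared Laplacian of the L¹-normalized Gaussian. -/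
theorem stmt4 (d : ℕ) (hd : 1 ≤ d) :
    ∃ C : ℝ, 0 < C ∧ ∀ σ R : ℝ, 0 < σ → 0 < R →
      (∫ y in {y : EuclideanSpace ℝ (Fin d) | R ≤ ‖y‖},
          (‖y‖^2 / σ^4 - d / σ^2)^2 * (Real.pi * σ^2) ^ (-(d : ℝ)) * Real.exp (-(‖y‖^2 / σ^2)))
        ≤ C * σ ^ (-(d : ℝ) - 3) * R⁻¹ * Real.exp (-(R^2 / (2 * σ^2))) := by
  obtain ⟨n, rfl⟩ := Nat.exists_eq_add_of_le' hd
  refine ⟨16 * (2 * ((n + 1 : ℕ) : ℝ) ^ 2 + 128) / π ^ (n + 1) * √(8 * π) ^ n, by positivity,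
    fun σ R hσ hR => ?_⟩
  have hnormalization : (π * σ ^ 2) ^ (-((n + 1 : ℕ) : ℝ)) = ((π * σ ^ 2) ^ (n + 1))⁻¹ := by
    rw [rpow_neg (by positivity), rpow_natCast]
  have hσpow : σ ^ (-((n + 1 : ℕ) : ℝ) - 3) = (σ ^ (n + 4))⁻¹ := by
    rw [← rpow_natCast, ← rpow_neg hσ.le]; push_cast; ring_nf
  simp_rw [hnormalization, mul_right_comm _ ((π * σ ^ 2) ^ (n + 1))⁻¹, integral_mul_const]
  calc _ ≤ (2 * ((n + 1 : ℕ) : ℝ) ^ 2 + 128) / σ ^ 4 * exp (-(R ^ 2 / (2 * σ ^ 2))) *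
          (16 * σ ^ 2 / R * (√(8 * π) * σ) ^ n) * ((π * σ ^ 2) ^ (n + 1))⁻¹ := by
        gcongr; exact setIntegral_sq_norm_sq_sub_mul_exp_le _ hσ hR
    _ = _ := by rw [hσpow]; field_simp; ring
end

section
/- Let d ≥ 1 and let n > d be an integer. There exists a constant C > 0, depending only on n and d, such that for all σ ∈ (0,1], all t ∈ ℝ and all x, y ∈ ℝ^d: ∫_{ℝ^d} G_{n,t}(|y−z|) · (π σ²)^(−d) · e^(−|z−x|²/σ²) dz ≤ C · σ^(−d) · G_{n,t}(|y−x|). -/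
/-!
Split the integral according to whether `‖y - z‖ ≥ ‖y - x‖ / 2`. On that region
`G_{n,t}(‖y - z‖) ≤ 2ⁿ G_{n,t}(‖y - x‖)`, and the Gaussian integrates to `(πσ²)^{d/2}`.
Otherwise `‖z - x‖ ≥ ‖y - x‖ / 2`, so the Gaussian is at most `exp(-‖y - x‖² / (8σ²))` times a
Gaussian of twice the variance; since `σ ≤ 1` and `⟨t⟩ ≥ 1`, this Gaussian factor decays faster
than any power and is at most `n! 8ⁿ G_{n,t}(‖y - x‖)`.
-/

open MeasureTheory

/-- The polynomially decaying function `G_{n,t}(r) = min(1, ⟨t⟩ⁿ/rⁿ)` (with value `1` at `r = 0`). -/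
noncomputable def G (n : ℕ) (t r : ℝ) : ℝ :=
  if r = 0 then 1 else min 1 (Real.sqrt (1 + t^2) ^ n / r ^ n)

open Real Nat

section GBounds

variable (n : ℕ) (t : ℝ) {r a : ℝ}

lemma G_le_one : G n t r ≤ 1 := by
  unfold G
  split_ifs
  exacts [le_rfl, min_le_left _ _]

lemma G_nonneg (hr : 0 ≤ r) : 0 ≤ G n t r := by
  unfold G
  split_ifs
  exacts [zero_le_one, le_min zero_le_one (by positivity)]

lemma G_eq_one_of_le_one (hr : 0 ≤ r) (hr1 : r ≤ 1) : G n t r = 1 := by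
  rcases hr.eq_or_lt with rfl | hr0
  · simp [G]
  rw [G, if_neg hr0.ne', min_eq_left]
  rw [one_le_div (by positivity)]
  gcongr
  exact hr1.trans (one_le_sqrt.mpr (by nlinarith))

lemma inv_pow_le_G (hr : 1 ≤ r) : (r ^ n)⁻¹ ≤ G n t r := by
  rw [G, if_neg (by positivity), inv_eq_one_div]
  refine le_min (div_le_one_of_le₀ (one_le_pow₀ hr) (by positivity)) ?_
  gcongr
  exact one_le_pow₀ (one_le_sqrt.mpr (by nlinarith))

lemma G_le_two_pow_mul_of_half_le (ha : 0 ≤ a) (hr : a / 2 ≤ r) :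
    G n t r ≤ 2 ^ n * G n t a := by
  rcases ha.eq_or_lt with rfl | ha0
  · rw [G_eq_one_of_le_one n t le_rfl zero_le_one, mul_one]
    exact (G_le_one n t).trans (one_le_pow₀ one_le_two)
  have hr0 : 0 < r := by linarith
  rw [G, if_neg hr0.ne', G, if_neg ha0.ne', mul_min_of_nonneg _ _ (by positivity), mul_one]
  refine min_le_min (one_le_pow₀ one_le_two) ?_
  calc √(1 + t ^ 2) ^ n / r ^ n ≤ √(1 + t ^ 2) ^ n / (a / 2) ^ n := by gcongr
    _ = 2 ^ n * (√(1 + t ^ 2) ^ n / a ^ n) := by rw [div_pow]; field_simp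

end GBounds

lemma exp_neg_le_factorial_div_pow (n : ℕ) {u : ℝ} (hu : 0 < u) : exp (-u) ≤ n ! / u ^ n := by
  rw [exp_neg, ← inv_div]
  exact inv_anti₀ (by positivity) (pow_div_factorial_le_exp _ hu.le n)

lemma exp_neg_sq_div_le_G (n : ℕ) (t : ℝ) {σ a : ℝ} (hσ : 0 < σ) (hσ1 : σ ≤ 1) (ha : 0 ≤ a) :
    exp (-(a ^ 2 / (8 * σ ^ 2))) ≤ n ! * 8 ^ n * G n t a := by
  have hC : (1 : ℝ) ≤ n ! * 8 ^ n :=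
    one_le_mul_of_one_le_of_one_le (mod_cast n.factorial_pos) (one_le_pow₀ (by norm_num))
  rcases le_total a 1 with ha1 | ha1
  · rw [G_eq_one_of_le_one n t ha ha1, mul_one]
    exact (exp_le_one_iff.mpr (by simp only [neg_nonpos]; positivity)).trans hC
  have hexp : a / 8 ≤ a ^ 2 / (8 * σ ^ 2) := by
    rw [div_le_div_iff₀ (by norm_num) (by positivity)]
    nlinarith [pow_le_one₀ hσ.le hσ1 (n := 2)]
  calc exp (-(a ^ 2 / (8 * σ ^ 2))) ≤ exp (-(a / 8)) := exp_le_exp.mpr (neg_le_neg hexp)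
    _ ≤ n ! / (a / 8) ^ n := exp_neg_le_factorial_div_pow n (by positivity)
    _ = n ! * 8 ^ n * (a ^ n)⁻¹ := by rw [div_pow]; field_simp
    _ ≤ n ! * 8 ^ n * G n t a := by gcongr; exact inv_pow_le_G n t ha1

lemma exp_neg_sq_div_le_of_half_le {σ a s : ℝ} (hσ : 0 < σ) (ha : 0 ≤ a) (hs : a / 2 ≤ s) :
    exp (-(s ^ 2 / σ ^ 2)) ≤ exp (-(a ^ 2 / (8 * σ ^ 2))) * exp (-(s ^ 2 / (2 * σ ^ 2))) := by
  rw [← exp_add, exp_le_exp]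
  have hsplit : s ^ 2 / σ ^ 2 = s ^ 2 / (2 * σ ^ 2) + s ^ 2 / (2 * σ ^ 2) := by field_simp; ring
  have hcross : a ^ 2 / (8 * σ ^ 2) ≤ s ^ 2 / (2 * σ ^ 2) := by
    rw [show a ^ 2 / (8 * σ ^ 2) = a ^ 2 / 4 / (2 * σ ^ 2) by ring]
    gcongr
    nlinarith
  linarith

lemma G_mul_exp_le {E : Type*} [SeminormedAddCommGroup E] (n : ℕ) (t : ℝ) {σ : ℝ} (hσ : 0 < σ)
    (x y z : E) :
    G n t ‖y - z‖ * exp (-(‖z - x‖ ^ 2 / σ ^ 2)) ≤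
      2 ^ n * G n t ‖y - x‖ * exp (-(‖z - x‖ ^ 2 / σ ^ 2)) +
        exp (-(‖y - x‖ ^ 2 / (8 * σ ^ 2))) * exp (-(‖z - x‖ ^ 2 / (2 * σ ^ 2))) := by
  have htri : ‖y - x‖ ≤ ‖y - z‖ + ‖z - x‖ := norm_sub_le_norm_sub_add_norm_sub y z x
  have hGa := G_nonneg n t (norm_nonneg (y - x))
  rcases le_total (‖y - x‖ / 2) ‖y - z‖ with hnear | hfar
  · calc G n t ‖y - z‖ * exp (-(‖z - x‖ ^ 2 / σ ^ 2))
          ≤ 2 ^ n * G n t ‖y - x‖ * exp (-(‖z - x‖ ^ 2 / σ ^ 2)) := by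
          gcongr
          exact G_le_two_pow_mul_of_half_le n t (norm_nonneg (y - x)) hnear
      _ ≤ _ := le_add_of_nonneg_right (by positivity)
  · have hdecay := exp_neg_sq_div_le_of_half_le hσ (norm_nonneg (y - x)) (s := ‖z - x‖)
      (by linarith)
    calc G n t ‖y - z‖ * exp (-(‖z - x‖ ^ 2 / σ ^ 2)) ≤ exp (-(‖z - x‖ ^ 2 / σ ^ 2)) :=
          mul_le_of_le_one_left (exp_pos _).le (G_le_one n t)
      _ ≤ _ := hdecay.trans (le_add_of_nonneg_left (by positivity))

section Gaussian

variable {E : Type*} [NormedAddCommGroup E] [InnerProductSpace ℝ E] [FiniteDimensional ℝ E]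
  [MeasurableSpace E] [BorelSpace E]

lemma integral_exp_neg_norm_sub_sq_div {τ : ℝ} (hτ : 0 < τ) (x : E) :
    ∫ z, exp (-(‖z - x‖ ^ 2 / τ)) = (π * τ) ^ (Module.finrank ℝ E / 2 : ℝ) := by
  have h := GaussianFourier.integral_rexp_neg_mul_sq_norm (V := E) (inv_pos.mpr hτ)
  rw [div_inv_eq_mul] at h
  rw [integral_sub_right_eq_self (fun v ↦ exp (-(‖v‖ ^ 2 / τ))), ← h]
  simp only [neg_mul, inv_mul_eq_div]

lemma integrable_exp_neg_norm_sub_sq_div {τ : ℝ} (hτ : 0 < τ) (x : E) :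
    Integrable (fun z : E ↦ exp (-(‖z - x‖ ^ 2 / τ))) := by
  refine Integrable.of_integral_ne_zero ?_
  rw [integral_exp_neg_norm_sub_sq_div hτ]
  exact (rpow_pos_of_pos (by positivity) _).ne'

lemma integral_G_mul_exp_le (n : ℕ) (t : ℝ) {σ : ℝ} (hσ : 0 < σ) (x y : E) :
    ∫ z, G n t ‖y - z‖ * exp (-(‖z - x‖ ^ 2 / σ ^ 2)) ≤
      2 ^ n * G n t ‖y - x‖ * (π * σ ^ 2) ^ (Module.finrank ℝ E / 2 : ℝ) +
        exp (-(‖y - x‖ ^ 2 / (8 * σ ^ 2))) * (π * (2 * σ ^ 2)) ^ (Module.finrank ℝ E / 2 : ℝ) := by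
  have hnarrow := integrable_exp_neg_norm_sub_sq_div (pow_pos hσ 2) x
  have hwide := integrable_exp_neg_norm_sub_sq_div (by positivity : 0 < 2 * σ ^ 2) x
  calc ∫ z, G n t ‖y - z‖ * exp (-(‖z - x‖ ^ 2 / σ ^ 2))
      ≤ ∫ z, (2 ^ n * G n t ‖y - x‖ * exp (-(‖z - x‖ ^ 2 / σ ^ 2)) +
          exp (-(‖y - x‖ ^ 2 / (8 * σ ^ 2))) * exp (-(‖z - x‖ ^ 2 / (2 * σ ^ 2)))) :=
        integral_mono_of_nonneg
          (.of_forall fun z ↦ mul_nonneg (G_nonneg n t (norm_nonneg _)) (exp_pos _).le)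
          ((hnarrow.const_mul _).add (hwide.const_mul _))
          (.of_forall (G_mul_exp_le n t hσ x y))
    _ = _ := by
        rw [integral_add (hnarrow.const_mul _) (hwide.const_mul _), integral_const_mul,
          integral_const_mul, integral_exp_neg_norm_sub_sq_div (pow_pos hσ 2),
          integral_exp_neg_norm_sub_sq_div (by positivity)]

end Gaussian

lemma rpow_half_mul_rpow_neg_le {p σ τ : ℝ} (hp : 0 ≤ p) (hσ : 0 < σ) (hτ : 0 < τ)
    (hτσ : τ ≤ π * σ ^ 2) : (π * τ) ^ (p / 2) * (π * σ ^ 2) ^ (-p) ≤ σ ^ (-p) := by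
  calc (π * τ) ^ (p / 2) * (π * σ ^ 2) ^ (-p)
      ≤ ((π * σ) ^ 2) ^ (p / 2) * (π * σ ^ 2) ^ (-p) := by
        gcongr
        nlinarith [pi_pos]
    _ = (π * σ / (π * σ ^ 2)) ^ p := by
        rw [← rpow_natCast, ← rpow_mul (by positivity), rpow_neg (by positivity),
          div_rpow (by positivity) (by positivity)]
        rw [show (2 : ℕ) * (p / 2) = p by push_cast; ring, div_eq_mul_inv]
    _ = σ ^ (-p) := by
        rw [rpow_neg hσ.le, ← inv_rpow hσ.le]
        congr 1
        field_simp

theorem stmt8_general (d n : ℕ) :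
    ∃ C : ℝ, 0 < C ∧ ∀ σ : ℝ, 0 < σ → σ ≤ 1 → ∀ (t : ℝ) (x y : EuclideanSpace ℝ (Fin d)),
      (∫ z, G n t ‖y - z‖ * ((Real.pi * σ^2) ^ (-(d : ℝ)) * Real.exp (-(‖z - x‖^2 / σ^2))))
        ≤ C * σ ^ (-(d : ℝ)) * G n t ‖y - x‖ := by
  refine ⟨2 ^ n + n ! * 8 ^ n, by positivity, fun σ hσ hσ1 t x y ↦ ?_⟩
  have hGa := G_nonneg n t (norm_nonneg (y - x))
  have hdecay := exp_neg_sq_div_le_G n t hσ hσ1 (norm_nonneg (y - x))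
  have hnarrow := rpow_half_mul_rpow_neg_le d.cast_nonneg hσ (pow_pos hσ 2)
    (le_mul_of_one_le_left (by positivity) (by linarith [pi_gt_three]))
  have hwide := rpow_half_mul_rpow_neg_le d.cast_nonneg hσ (by positivity : 0 < 2 * σ ^ 2)
    (by gcongr; linarith [pi_gt_three])
  have hint := integral_G_mul_exp_le n t hσ x y
  rw [finrank_euclideanSpace_fin] at hint
  simp_rw [mul_left_comm (G n t _), integral_const_mul]
  calc (π * σ ^ 2) ^ (-(d : ℝ)) * ∫ z, G n t ‖y - z‖ * exp (-(‖z - x‖ ^ 2 / σ ^ 2))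
      ≤ (π * σ ^ 2) ^ (-(d : ℝ)) * (2 ^ n * G n t ‖y - x‖ * (π * σ ^ 2) ^ (d / 2 : ℝ) +
          exp (-(‖y - x‖ ^ 2 / (8 * σ ^ 2))) * (π * (2 * σ ^ 2)) ^ (d / 2 : ℝ)) := by
        gcongr
    _ = 2 ^ n * G n t ‖y - x‖ * ((π * σ ^ 2) ^ (d / 2 : ℝ) * (π * σ ^ 2) ^ (-(d : ℝ))) +
          exp (-(‖y - x‖ ^ 2 / (8 * σ ^ 2))) *
            ((π * (2 * σ ^ 2)) ^ (d / 2 : ℝ) * (π * σ ^ 2) ^ (-(d : ℝ))) := by ring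
    _ ≤ 2 ^ n * G n t ‖y - x‖ * σ ^ (-(d : ℝ)) +
          n ! * 8 ^ n * G n t ‖y - x‖ * σ ^ (-(d : ℝ)) := by
        gcongr
    _ = (2 ^ n + n ! * 8 ^ n) * σ ^ (-(d : ℝ)) * G n t ‖y - x‖ := by ring

/-- convolution of `G_{n,t}` with a squared shifted Gaussian. -/
theorem stmt8 (d n : ℕ) (hd : 1 ≤ d) (hn : d < n) :
    ∃ C : ℝ, 0 < C ∧ ∀ σ : ℝ, 0 < σ → σ ≤ 1 → ∀ (t : ℝ) (x y : EuclideanSpace ℝ (Fin d)),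
      (∫ z, G n t ‖y - z‖ * ((Real.pi * σ^2) ^ (-(d : ℝ)) * Real.exp (-(‖z - x‖^2 / σ^2))))
        ≤ C * σ ^ (-(d : ℝ)) * G n t ‖y - x‖ :=
  stmt8_general d n
end

section
/- Let n ∈ ℕ, let ξ : ℝ → [0,1] be (n+2)-times continuously differentiable with ξ(x) = 1 for x ≤ 0 and ξ(x) = 0 for x ≥ 1, and let α > 1. For E > 0 define g_E(x) := ξ( (x − E) / ((α−1)·E) ). Then for all E > 0 and all p > 0: Σ_{k=0}^{n+2} ∫_ℝ ⟨x⟩^(k−p−1) · |g_E^(k)(x)| dx ≤ ι_p · ‖ξ‖_∞ + Σ_{k=1}^{⌈p⌉} ‖ξ^(k)‖_∞ / ((α−1)·E)^(k−1) + Σ_{k=⌈p⌉+1}^{n+2} ( α/(α−1) )^(k−1) · ⟨E⟩^(k−p−1) · E^(−(k−1)) · ‖ξ^(k)‖_∞, where ⌈p⌉ denotes the least integer ≥ p (and the second sum is empty if ⌈p⌉ > n+2). -/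
/-!
Write `c = (α - 1) E`. By the chain rule `g_E^(k)(x) = c^(-k) ξ^(k)((x - E) / c)`, and for `k ≥ 1`
the derivative `ξ^(k)` vanishes off `[0, 1]`, so `g_E^(k)` lives on `[E, α E]`, an interval of
length `c`. Hence the `k`-th integral is at most `c^(1-k) ‖ξ^(k)‖_∞` times the supremum of the
weight `⟨x⟩^(k-p-1)` on `[E, α E]`. For `k ≤ ⌈p⌉` the exponent is nonpositive and the weight is
at most `1`; otherwise it is at most `⟨α E⟩^(k-p-1) ≤ α^(k-1) ⟨E⟩^(k-p-1)`.
-/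

open MeasureTheory Set

lemma iteratedDeriv_comp_sub_div {ξ : ℝ → ℝ} {k : ℕ} (hξ : ContDiff ℝ k ξ) (a c x : ℝ) :
    iteratedDeriv k (fun x => ξ ((x - a) / c)) x = c⁻¹ ^ k * iteratedDeriv k ξ ((x - a) / c) := by
  have h := congrFun (iteratedDeriv_comp_sub_const k (fun y => ξ (c⁻¹ * y)) a) x
  simp only [iteratedDeriv_comp_const_mul hξ] at h
  simpa only [div_eq_inv_mul] using h

lemma iteratedDeriv_eq_zero_of_notMem_Icc {ξ : ℝ → ℝ} {y₀ y₁ : ℝ} (h0 : ∀ x ≤ 0, ξ x = y₀)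
    (h1 : ∀ x, 1 ≤ x → ξ x = y₁) {k : ℕ} (hk : k ≠ 0) {y : ℝ} (hy : y ∉ Icc 0 1) :
    iteratedDeriv k ξ y = 0 := by
  have hconst : ∃ y', ξ =ᶠ[nhds y] fun _ => y' := by
    rcases not_and_or.mp hy with hy | hy
    · refine ⟨y₀, ?_⟩
      filter_upwards [Iio_mem_nhds (not_le.mp hy)] with x hx using h0 x hx.le
    · refine ⟨y₁, ?_⟩
      filter_upwards [Ioi_mem_nhds (not_le.mp hy)] with x hx using h1 x hx.le
  obtain ⟨y', hy'⟩ := hconst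
  rw [hy'.iteratedDeriv_eq, iteratedDeriv_const, if_neg hk]

lemma Continuous.bddAbove_range_abs_of_eq_const_off_Icc {f : ℝ → ℝ} (hf : Continuous f)
    {a b y₀ y₁ : ℝ} (h0 : ∀ x < a, f x = y₀) (h1 : ∀ x, b < x → f x = y₁) :
    BddAbove (range fun x => |f x|) := by
  obtain ⟨C, hC⟩ := (isCompact_Icc (a := a) (b := b)).bddAbove_image hf.abs.continuousOn
  refine ⟨max C (max |y₀| |y₁|), ?_⟩
  rintro _ ⟨x, rfl⟩
  by_cases hxa : x < a
  · simp [h0 x hxa]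
  by_cases hxb : b < x
  · simp [h1 x hxb]
  exact le_max_of_le_left (hC ⟨x, ⟨not_lt.mp hxa, not_lt.mp hxb⟩, rfl⟩)

lemma bddAbove_range_abs_iteratedDeriv {ξ : ℝ → ℝ} {k : ℕ} (hξ : ContDiff ℝ k ξ) {y₀ y₁ : ℝ}
    (h0 : ∀ x ≤ 0, ξ x = y₀) (h1 : ∀ x, 1 ≤ x → ξ x = y₁) :
    BddAbove (range fun x => |iteratedDeriv k ξ x|) := by
  have hcont := hξ.continuous_iteratedDeriv k le_rfl
  rcases eq_or_ne k 0 with rfl | hk0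
  · simp only [iteratedDeriv_zero] at hcont ⊢
    exact hcont.bddAbove_range_abs_of_eq_const_off_Icc (fun x hx => h0 x hx.le)
      (fun x hx => h1 x hx.le)
  · exact hcont.bddAbove_range_abs_of_eq_const_off_Icc (y₀ := 0) (y₁ := 0)
      (fun x hx => iteratedDeriv_eq_zero_of_notMem_Icc h0 h1 hk0 fun h => (not_le.mpr hx) h.1)
      (fun x hx => iteratedDeriv_eq_zero_of_notMem_Icc h0 h1 hk0 fun h => (not_le.mpr hx) h.2)

lemma integral_le_of_eq_zero_off_Icc {F : ℝ → ℝ} {a b C : ℝ} (hab : a ≤ b)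
    (hF : ∀ x ∉ Icc a b, F x = 0) (hC : ∀ x ∈ Icc a b, |F x| ≤ C) :
    ∫ x, F x ≤ C * (b - a) := by
  rw [← setIntegral_eq_integral_of_forall_compl_eq_zero hF, ← Real.volume_real_Icc_of_le hab]
  exact (le_abs_self _).trans (norm_setIntegral_le_of_norm_le_const measure_Icc_lt_top
    fun x hx => (Real.norm_eq_abs _).trans_le (hC x hx))

lemma integral_mul_abs_iteratedDeriv_comp_sub_div_le {ξ : ℝ → ℝ} {k : ℕ} (hk : k ≠ 0)
    (hξ : ContDiff ℝ k ξ) {y₀ y₁ : ℝ} (h0 : ∀ x ≤ 0, ξ x = y₀) (h1 : ∀ x, 1 ≤ x → ξ x = y₁)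
    {a c : ℝ} (hc : 0 < c) {w : ℝ → ℝ} {W : ℝ} (hW : ∀ x ∈ Icc a (a + c), |w x| ≤ W) :
    ∫ x, w x * |iteratedDeriv k (fun x => ξ ((x - a) / c)) x|
      ≤ W * (⨆ x, |iteratedDeriv k ξ x|) / c ^ (k - 1) := by
  set M := ⨆ x, |iteratedDeriv k ξ x|
  have hM : ∀ y, |iteratedDeriv k ξ y| ≤ M :=
    le_ciSup (bddAbove_range_abs_iteratedDeriv hξ h0 h1)
  have hout : ∀ x ∉ Icc a (a + c), iteratedDeriv k ξ ((x - a) / c) = 0 := by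
    refine fun x hx => iteratedDeriv_eq_zero_of_notMem_Icc h0 h1 hk fun h => hx ⟨?_, ?_⟩
    · have := h.1; rw [le_div_iff₀ hc] at this; linarith
    · have := h.2; rw [div_le_iff₀ hc] at this; linarith
  have hbound := integral_le_of_eq_zero_off_Icc (a := a) (b := a + c) (C := W * (c⁻¹ ^ k * M))
    (F := fun x => w x * |iteratedDeriv k (fun x => ξ ((x - a) / c)) x|) (by linarith)
    (fun x hx => by simp [iteratedDeriv_comp_sub_div hξ, hout x hx])
    (fun x hx => by
      rw [iteratedDeriv_comp_sub_div hξ, abs_mul, abs_abs, abs_mul, abs_pow, abs_inv, abs_of_pos hc]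
      exact mul_le_mul (hW x hx) (mul_le_mul_of_nonneg_left (hM _) (by positivity))
        (by positivity) ((abs_nonneg _).trans (hW x hx)))
  obtain ⟨j, rfl⟩ := Nat.exists_eq_succ_of_ne_zero hk
  convert hbound using 1
  rw [Nat.succ_sub_one, add_sub_cancel_left, inv_pow, pow_succ]
  field_simp

lemma integral_mul_abs_comp_le_integral_mul_iSup {w f : ℝ → ℝ} (hw : Integrable w)
    (hw0 : 0 ≤ w) (hf : BddAbove (range fun x => |f x|)) (φ : ℝ → ℝ) :
    ∫ x, w x * |f (φ x)| ≤ (∫ x, w x) * ⨆ x, |f x| := by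
  rw [← integral_mul_const]
  exact integral_mono_of_nonneg (.of_forall fun x => mul_nonneg (hw0 x) (abs_nonneg _))
    (hw.mul_const _) (.of_forall fun x => mul_le_mul_of_nonneg_left (le_ciSup hf _) (hw0 x))

lemma integrable_sqrt_one_add_sq_rpow_neg {r : ℝ} (hr : 1 < r) :
    Integrable fun x : ℝ => √(1 + x ^ 2) ^ (-r) := by
  refine (integrable_rpow_neg_one_add_norm_sq (E := ℝ) (μ := volume) (r := r)
    (by simpa using hr)).congr (.of_forall fun x => ?_)
  simp only [Real.norm_eq_abs, sq_abs]
  rw [Real.sqrt_eq_rpow, ← Real.rpow_mul (by positivity)]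
  ring_nf

lemma sqrt_one_add_sq_rpow_le_of_mem_Icc {α E e x : ℝ} (hα : 1 ≤ α) (hE : 0 ≤ E) (he : 0 ≤ e)
    (hx : x ∈ Icc E (α * E)) : √(1 + x ^ 2) ^ e ≤ α ^ e * √(1 + E ^ 2) ^ e := by
  have hsqrt : √(1 + x ^ 2) ≤ α * √(1 + E ^ 2) := by
    rw [← Real.sqrt_sq (by linarith : 0 ≤ α), ← Real.sqrt_mul (by positivity)]
    exact Real.sqrt_le_sqrt (by nlinarith [hx.1, hx.2])
  rw [← Real.mul_rpow (by linarith) (by positivity)]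
  exact Real.rpow_le_rpow (by positivity) hsqrt he

lemma Finset.sum_Icc_le_sum_Icc_add_sum_Icc {T f g : ℕ → ℝ} {l m N : ℕ} (hlm : l ≤ m + 1)
    (hf0 : ∀ k ∈ Finset.Icc l m, 0 ≤ f k) (hf : ∀ k ∈ Finset.Icc l N, k ≤ m → T k ≤ f k)
    (hg : ∀ k ∈ Finset.Icc (m + 1) N, T k ≤ g k) :
    ∑ k ∈ Finset.Icc l N, T k ≤ ∑ k ∈ Finset.Icc l m, f k + ∑ k ∈ Finset.Icc (m + 1) N, g k := by
  rw [← Finset.sum_filter_add_sum_filter_not (Finset.Icc l N) (· ≤ m)]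
  have hlow : (Finset.Icc l N).filter (· ≤ m) ⊆ Finset.Icc l m := by
    intro k; simp only [Finset.mem_filter, Finset.mem_Icc]; omega
  have hhigh : (Finset.Icc l N).filter (¬ · ≤ m) = Finset.Icc (m + 1) N := by
    ext k; simp only [Finset.mem_filter, Finset.mem_Icc]; omega
  rw [hhigh]
  refine add_le_add ?_ (Finset.sum_le_sum hg)
  calc ∑ k ∈ (Finset.Icc l N).filter (· ≤ m), T k
      ≤ ∑ k ∈ (Finset.Icc l N).filter (· ≤ m), f k :=
        Finset.sum_le_sum fun k hk => hf k (Finset.mem_filter.mp hk).1 (Finset.mem_filter.mp hk).2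
    _ ≤ ∑ k ∈ Finset.Icc l m, f k :=
        Finset.sum_le_sum_of_subset_of_nonneg hlow fun k hk _ => hf0 k hk

lemma integral_sqrt_one_add_sq_rpow_mul_abs_iteratedDeriv_le_of_le {ξ : ℝ → ℝ} {k : ℕ}
    (hk : k ≠ 0) (hξ : ContDiff ℝ k ξ) {y₀ y₁ : ℝ} (h0 : ∀ x ≤ 0, ξ x = y₀)
    (h1 : ∀ x, 1 ≤ x → ξ x = y₁) {a c p : ℝ} (hc : 0 < c) (hkp : (k : ℝ) ≤ p + 1) :
    ∫ x, √(1 + x ^ 2) ^ ((k : ℝ) - p - 1) * |iteratedDeriv k (fun x => ξ ((x - a) / c)) x|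
      ≤ (⨆ x, |iteratedDeriv k ξ x|) / c ^ (k - 1) := by
  simpa using integral_mul_abs_iteratedDeriv_comp_sub_div_le hk hξ h0 h1 hc (W := 1)
    fun x _ => by
      rw [abs_of_nonneg (by positivity)]
      exact Real.rpow_le_one_of_one_le_of_nonpos (Real.one_le_sqrt.mpr (by nlinarith))
        (by linarith)

lemma integral_sqrt_one_add_sq_rpow_mul_abs_iteratedDeriv_le_of_ge {ξ : ℝ → ℝ} {k : ℕ}
    (hk : k ≠ 0) (hξ : ContDiff ℝ k ξ) {y₀ y₁ : ℝ} (h0 : ∀ x ≤ 0, ξ x = y₀)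
    (h1 : ∀ x, 1 ≤ x → ξ x = y₁) {α E p : ℝ} (hα : 1 < α) (hE : 0 < E) (hp : 0 ≤ p)
    (hkp : p + 1 ≤ k) :
    ∫ x, √(1 + x ^ 2) ^ ((k : ℝ) - p - 1) *
        |iteratedDeriv k (fun x => ξ ((x - E) / ((α - 1) * E))) x|
      ≤ (α / (α - 1)) ^ (k - 1) * √(1 + E ^ 2) ^ ((k : ℝ) - p - 1) *
          E ^ (-((k : ℝ) - 1)) * ⨆ x, |iteratedDeriv k ξ x| := by
  have hk1 : ((k - 1 : ℕ) : ℝ) = k - 1 := by rw [Nat.cast_sub (by omega), Nat.cast_one]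
  refine (integral_mul_abs_iteratedDeriv_comp_sub_div_le hk hξ h0 h1
    (mul_pos (by linarith) hE) (W := α ^ (k - 1) * √(1 + E ^ 2) ^ ((k : ℝ) - p - 1))
    fun x hx => ?_).trans_eq ?_
  · rw [show E + (α - 1) * E = α * E by ring] at hx
    rw [abs_of_nonneg (by positivity)]
    refine (sqrt_one_add_sq_rpow_le_of_mem_Icc hα.le hE.le (by linarith) hx).trans ?_
    rw [← Real.rpow_natCast α (k - 1), hk1]
    gcongr
    · exact hα.le
    · linarith
  · rw [Real.rpow_neg hE.le, ← hk1, Real.rpow_natCast, div_pow, mul_pow]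
    have : α - 1 ≠ 0 := by linarith
    field_simp

theorem stmt14_general (n : ℕ) (ξ : ℝ → ℝ)
    (hξ : ContDiff ℝ (n + 2 : ℕ) ξ) (h0 : ∀ x ≤ 0, ξ x = 1) (h1 : ∀ x, 1 ≤ x → ξ x = 0)
    (α : ℝ) (hα : 1 < α) (E : ℝ) (hE : 0 < E) (p : ℝ) (hp : 0 < p) :
    (∑ k ∈ Finset.range (n + 3),
        ∫ x : ℝ, Real.sqrt (1 + x^2) ^ ((k : ℝ) - p - 1) *
          |iteratedDeriv k (fun x => ξ ((x - E) / ((α - 1) * E))) x|)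
      ≤ (∫ x : ℝ, Real.sqrt (1 + x^2) ^ (-p - 1)) * (⨆ x, |ξ x|)
        + (∑ k ∈ Finset.Icc 1 ⌈p⌉₊, (⨆ x, |iteratedDeriv k ξ x|) / ((α - 1) * E) ^ (k - 1))
        + ∑ k ∈ Finset.Icc (⌈p⌉₊ + 1) (n + 2),
            (α / (α - 1)) ^ (k - 1) * Real.sqrt (1 + E^2) ^ ((k : ℝ) - p - 1) *
              E ^ (-((k : ℝ) - 1)) * ⨆ x, |iteratedDeriv k ξ x| := by
  have hξk : ∀ k ≤ n + 2, ContDiff ℝ k ξ := fun k hk => hξ.of_le (by exact_mod_cast hk)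
  have hzero : ∫ x, √(1 + x ^ 2) ^ (((0 : ℕ) : ℝ) - p - 1) *
        |iteratedDeriv 0 (fun x => ξ ((x - E) / ((α - 1) * E))) x|
      ≤ (∫ x, √(1 + x ^ 2) ^ (-p - 1)) * ⨆ x, |ξ x| := by
    simp only [Nat.cast_zero, zero_sub, iteratedDeriv_zero, show -p - 1 = -(p + 1) by ring]
    exact integral_mul_abs_comp_le_integral_mul_iSup
      (integrable_sqrt_one_add_sq_rpow_neg (by linarith)) (fun x => by positivity)
      (by simpa using bddAbove_range_abs_iteratedDeriv (contDiff_zero.mpr hξ.continuous) h0 h1) _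
  have hc : 0 < (α - 1) * E := mul_pos (by linarith) hE
  rw [Finset.range_eq_Ico, Finset.sum_eq_sum_Ico_succ_bot (by omega), zero_add,
    show n + 3 = n + 2 + 1 from rfl, Finset.Ico_add_one_right_eq_Icc, add_assoc]
  refine add_le_add hzero (Finset.sum_Icc_le_sum_Icc_add_sum_Icc (by omega)
    (fun k _ => div_nonneg (Real.iSup_nonneg fun _ => abs_nonneg _) (by positivity))
    (fun k hk hkp => ?_) (fun k hk => ?_))
  · obtain ⟨hk1, hkn⟩ := Finset.mem_Icc.mp hk
    exact integral_sqrt_one_add_sq_rpow_mul_abs_iteratedDeriv_le_of_le (by omega) (hξk k hkn)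
      h0 h1 hc ((Nat.cast_le.mpr hkp).trans (Nat.ceil_lt_add_one hp.le).le)
  · obtain ⟨hk1, hkn⟩ := Finset.mem_Icc.mp hk
    exact integral_sqrt_one_add_sq_rpow_mul_abs_iteratedDeriv_le_of_ge (by omega) (hξk k hkn)
      h0 h1 hα hE hp.le ((add_le_add_left (Nat.le_ceil p) 1).trans (by exact_mod_cast hk1))

/-- weighted-norm bound for the scaled energy cutoff function `g_E`. -/
theorem stmt14 (n : ℕ) (ξ : ℝ → ℝ) (hmem : ∀ x, ξ x ∈ Set.Icc (0 : ℝ) 1)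
    (hξ : ContDiff ℝ (n + 2 : ℕ) ξ) (h0 : ∀ x ≤ 0, ξ x = 1) (h1 : ∀ x, 1 ≤ x → ξ x = 0)
    (α : ℝ) (hα : 1 < α) (E : ℝ) (hE : 0 < E) (p : ℝ) (hp : 0 < p) :
    (∑ k ∈ Finset.range (n + 3),
        ∫ x : ℝ, Real.sqrt (1 + x^2) ^ ((k : ℝ) - p - 1) *
          |iteratedDeriv k (fun x => ξ ((x - E) / ((α - 1) * E))) x|)
      ≤ (∫ x : ℝ, Real.sqrt (1 + x^2) ^ (-p - 1)) * (⨆ x, |ξ x|)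
        + (∑ k ∈ Finset.Icc 1 ⌈p⌉₊, (⨆ x, |iteratedDeriv k ξ x|) / ((α - 1) * E) ^ (k - 1))
        + ∑ k ∈ Finset.Icc (⌈p⌉₊ + 1) (n + 2),
            (α / (α - 1)) ^ (k - 1) * Real.sqrt (1 + E^2) ^ ((k : ℝ) - p - 1) *
              E ^ (-((k : ℝ) - 1)) * ⨆ x, |iteratedDeriv k ξ x| :=
  stmt14_general n ξ hξ h0 h1 α hα E hE p hp
end

section
/- Let A be a normed ring (e.g. a C*-algebra), let N, M ∈ ℕ with N or M even, and let a₁, …, a_N, b₁, …, b_M ∈ A. Then ‖ [a₁⋯a_N, b₁⋯b_M] ‖ ≤ Σ_{i=1}^N Σ_{j=1}^M ( Π_{k≠i} ‖a_k‖ ) · ( Π_{l≠j} ‖b_l‖ ) · ‖ {a_i, b_j} ‖, where [x,y] := xy − yx and {x,y} := xy + yx. -/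
/-!
For a central `ε` with `‖ε z‖ ≤ ‖z‖`, write `[x, y]_ε = x y - ε y x`. Peeling off the first
factor, `[x P, y]_(ε ^ (n + 1)) = ε ^ n [x, y]_ε P + x [P, y]_(ε ^ n)`, so by induction the
twisted commutator of an `n`-fold product with `y` is bounded by the twisted commutators of the
factors with `y`. For `ε = 1` this is the Leibniz bound for commutators; for `ε = -1` and `n`
even the left side is an ordinary commutator while the right side involves anticommutators.
The estimate follows by expanding `[∏ a, ∏ b]` with the first bound along `a`, then each
`[a i, ∏ b]` with the second along `b` when `M` is even; the case of even `N` is symmetric.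
-/

open Finset

theorem Fin.prod_univ_erase {M : Type*} [CommMonoid M] {n : ℕ} (f : Fin (n + 1) → M)
    (i : Fin (n + 1)) : ∏ k ∈ univ.erase i, f k = ∏ k : Fin n, f (i.succAbove k) := by
  rw [Fin.univ_succAbove n i, erase_cons, prod_map]
  rfl

theorem Fin.sum_prod_erase_mul_succ {R : Type*} [CommSemiring R] {n : ℕ}
    (g f : Fin (n + 1) → R) :
    ∑ i, (∏ k ∈ univ.erase i, g k) * f i
      = (∏ k : Fin n, g k.succ) * f 0
        + g 0 * ∑ i : Fin n, (∏ k ∈ univ.erase i, g k.succ) * f i.succ := by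
  rw [Fin.sum_univ_succ, mul_sum]
  congr 1
  · rw [Fin.prod_univ_erase]
    simp only [Fin.succAbove_zero]
  · refine sum_congr rfl fun i _ => ?_
    cases n with
    | zero => exact i.elim0
    | succ n =>
      rw [Fin.prod_univ_erase, Fin.prod_univ_erase, Fin.prod_univ_succ, mul_assoc]
      simp only [Fin.succ_succAbove_zero, Fin.succ_succAbove_succ]

section NormedRing

variable {A : Type*} [NormedRing A]

theorem norm_mul_list_prod_ofFn_le {n : ℕ} (c : A) (g : Fin n → A) :
    ‖c * (List.ofFn g).prod‖ ≤ ‖c‖ * ∏ k, ‖g k‖ := by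
  simpa [Fin.prod_ofFn, List.map_ofFn, Function.comp_def] using
    List.norm_prod_le' (l := c :: List.ofFn g) (List.cons_ne_nil _ _)

theorem norm_pow_mul_le_of_forall_norm_mul_le {ε : A} (hε : ∀ z, ‖ε * z‖ ≤ ‖z‖) (n : ℕ)
    (z : A) : ‖ε ^ n * z‖ ≤ ‖z‖ := by
  induction n with
  | zero => simp
  | succ n ih => exact (pow_succ' ε n ▸ mul_assoc ε (ε ^ n) z ▸ hε _).trans ih

theorem norm_list_prod_ofFn_mul_sub_pow_mul_le {ε : A} (hcomm : ∀ x, Commute ε x)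
    (hε : ∀ z, ‖ε * z‖ ≤ ‖z‖) {n : ℕ} (a : Fin n → A) (y : A) :
    ‖(List.ofFn a).prod * y - ε ^ n * y * (List.ofFn a).prod‖
      ≤ ∑ i, (∏ k ∈ univ.erase i, ‖a k‖) * ‖a i * y - ε * y * a i‖ := by
  induction n with
  | zero => simp
  | succ n ih =>
    set x := a 0
    set P := (List.ofFn fun i => a i.succ).prod
    have hx : x * ε ^ n = ε ^ n * x := ((hcomm x).pow_left n).eq.symm
    have split : (List.ofFn a).prod * y - ε ^ (n + 1) * y * (List.ofFn a).prod
        = ε ^ n * ((x * y - ε * y * x) * P) + x * (P * y - ε ^ n * y * P) := by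
      simp only [List.ofFn_succ, List.prod_cons, mul_sub, sub_mul, ← mul_assoc, hx, pow_succ]
      abel
    rw [split, Fin.sum_prod_erase_mul_succ]
    refine (norm_add_le _ _).trans (add_le_add ?_ ?_)
    · exact (norm_pow_mul_le_of_forall_norm_mul_le hε n _).trans
        ((norm_mul_list_prod_ofFn_le _ _).trans_eq (mul_comm _ _))
    · exact (norm_mul_le _ _).trans (mul_le_mul_of_nonneg_left (ih _) (norm_nonneg x))

theorem norm_list_prod_ofFn_commutator_le {n : ℕ} (a : Fin n → A) (y : A) :
    ‖(List.ofFn a).prod * y - y * (List.ofFn a).prod‖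
      ≤ ∑ i, (∏ k ∈ univ.erase i, ‖a k‖) * ‖a i * y - y * a i‖ := by
  simpa using norm_list_prod_ofFn_mul_sub_pow_mul_le (ε := (1 : A)) Commute.one_left
    (fun z => by rw [one_mul]) a y

theorem norm_list_prod_ofFn_commutator_le_of_even {n : ℕ} (hn : Even n) (a : Fin n → A)
    (y : A) :
    ‖(List.ofFn a).prod * y - y * (List.ofFn a).prod‖
      ≤ ∑ i, (∏ k ∈ univ.erase i, ‖a k‖) * ‖a i * y + y * a i‖ := by
  simpa [hn.neg_one_pow] using norm_list_prod_ofFn_mul_sub_pow_mul_le (ε := (-1 : A))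
    Commute.neg_one_left (fun z => by rw [neg_one_mul, norm_neg]) a y

theorem norm_commutator_list_prod_ofFn_le_of_even_right {N M : ℕ} (hM : Even M)
    (a : Fin N → A) (b : Fin M → A) :
    ‖(List.ofFn a).prod * (List.ofFn b).prod - (List.ofFn b).prod * (List.ofFn a).prod‖
      ≤ ∑ i, ∑ j, (∏ k ∈ univ.erase i, ‖a k‖) * (∏ l ∈ univ.erase j, ‖b l‖) *
            ‖a i * b j + b j * a i‖ := by
  refine (norm_list_prod_ofFn_commutator_le a _).trans (sum_le_sum fun i _ => ?_)
  rw [norm_sub_rev]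
  refine (mul_le_mul_of_nonneg_left (norm_list_prod_ofFn_commutator_le_of_even hM b (a i))
    (by positivity)).trans_eq ?_
  rw [mul_sum]
  refine sum_congr rfl fun j _ => ?_
  rw [add_comm (b j * a i)]
  ring

end NormedRing

/-- higher commutator estimate in a normed ring, for products of
`N` and `M` factors where `N` or `M` is even. -/
theorem stmt16 {A : Type*} [NormedRing A] (N M : ℕ) (h : Even N ∨ Even M)
    (a : Fin N → A) (b : Fin M → A) :
    ‖(List.ofFn a).prod * (List.ofFn b).prod - (List.ofFn b).prod * (List.ofFn a).prod‖
      ≤ ∑ i : Fin N, ∑ j : Fin M,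
          (∏ k ∈ Finset.univ.erase i, ‖a k‖) * (∏ l ∈ Finset.univ.erase j, ‖b l‖) *
            ‖a i * b j + b j * a i‖ := by
  rcases h with hN | hM
  · rw [norm_sub_rev, sum_comm]
    refine (norm_commutator_list_prod_ofFn_le_of_even_right hN b a).trans_eq
      (sum_congr rfl fun j _ => sum_congr rfl fun i _ => ?_)
    rw [add_comm (b j * a i)]
    ring
  · exact norm_commutator_list_prod_ofFn_le_of_even_right hM a b
end
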